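/- arXiv:2010.10394 — 2 statements merged into one kernel-verified Lean document; each statement's English description precedes it below -/
import Mathlib

section
/- Every (λ,κ)-graph with κ ≤ ℵ_ω contains an (ℵ₀,κ)-subgraph; i.e., if λ < κ ≤ ℵ_ω are infinite cardinals and (A,B) is bipartite with |A| = λ, |B| = κ and every vertex of B having infinitely many neighbours in A, then there are a countable A' ⊆ A and B' ⊆ B with |B'| = κ such that every vertex of B' has infinitely many neighbours in A'. -/
/-!
Embed `A` into `ω_{n+1}` when `|A| ≤ ℵ_{n+1}`, and induct on `n`. Every `b` has a countable
infinite set of neighbours, which by regularity of `ℵ_{n+1}` lies below some `F b < ω_{n+1}`.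
Some `x < ω_{n+1}` bounds `F b` for `κ` many `b`: for regular `κ > ℵ_{n+1}` by pigeonhole, and for
`κ = ℵ_ω` because each `ℵ_m` is exceeded below some `x_m` and the countably many `x_m` are bounded.
The graph between `{a < x}`, of size at most `ℵ_n`, and those `b` then falls under the induction
hypothesis.
-/

open Cardinal Ordinal Set Order

universe u

section

variable {α β ι : Type u}

def HasAleph0Subgraph (E : α → β → Prop) : Prop :=
  ∃ (A' : Set α) (B' : Set β), A'.Countable ∧ #B' = #β ∧
    ∀ b ∈ B', {a : α | a ∈ A' ∧ E a b}.Infinite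

lemma hasAleph0Subgraph_of_countable [Countable α] {E : α → β → Prop}
    (hE : ∀ b, {a | E a b}.Infinite) : HasAleph0Subgraph E :=
  ⟨univ, univ, countable_univ, mk_univ, fun b _ => by simpa using hE b⟩

lemma HasAleph0Subgraph.of_restrict {E : α → β → Prop} {s : Set α} {t : Set β} (ht : #t = #β)
    (h : HasAleph0Subgraph fun (a : s) (b : t) => E a b) : HasAleph0Subgraph E := by
  obtain ⟨A, B, hA, hB, hAB⟩ := h
  refine ⟨(↑) '' A, (↑) '' B, hA.image _, by rw [mk_image_eq Subtype.val_injective, hB, ht], ?_⟩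
  rintro _ ⟨b, hb, rfl⟩
  refine ((hAB b hb).image Subtype.val_injective.injOn).mono ?_
  rintro _ ⟨a, ha, rfl⟩
  exact ⟨mem_image_of_mem _ ha.1, ha.2⟩

lemma Set.Countable.not_isCofinal [LinearOrder ι] (hι : ℵ₀ < Order.cof ι) {s : Set ι}
    (hs : s.Countable) : ¬ IsCofinal s :=
  fun h => ((Order.cof_le h).trans hs.le_aleph0).not_gt hι

lemma Set.Infinite.exists_infinite_sep_lt [LinearOrder ι] (hι : ℵ₀ < Order.cof ι) {s : Set α}
    (hs : s.Infinite) (f : α → ι) : ∃ x, {a ∈ s | f a < x}.Infinite := by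
  obtain ⟨t, hts, htc, hti⟩ := hs.exists_subset_countable_infinite
  obtain ⟨x, hx⟩ := not_isCofinal_iff.1 ((htc.image f).not_isCofinal hι)
  exact ⟨x, hti.mono fun a ha => ⟨hts ha, hx _ (mem_image_of_mem f ha)⟩⟩

lemma exists_lt_mk_setOf_le [Preorder ι] (F : β → ι) {μ : Cardinal} (hμ : μ < #β)
    (hι : #ι < #β) (hβ : ℵ₀ ≤ #β) : ∃ x, μ < #{b | F b ≤ x} := by
  by_contra! h
  have : #β ≤ #ι * μ := mk_le_mk_mul_of_mk_preimage_le F fun x =>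
    (mk_le_mk_of_subset fun b (hb : F b = x) => hb.le).trans (h x)
  exact (mul_lt_of_lt hβ hι hμ).not_ge this

lemma isRegular_or_eq_aleph_omega0 {κ : Cardinal} (h₀ : ℵ₀ ≤ κ) (h : κ ≤ ℵ_ ω) :
    κ.IsRegular ∨ κ = ℵ_ ω :=
  (isRegular_or_isSingular h₀).imp_right fun hs => h.antisymm hs.aleph_omega0_le

lemma exists_mk_setOf_le_eq [LinearOrder ι] (hι : ℵ₀ < Order.cof ι) (F : β → ι)
    (hιβ : #ι < #β) (hβ : #β ≤ ℵ_ ω) : ∃ x, #{b | F b ≤ x} = #β := by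
  have h₀ : ℵ₀ ≤ #β := (hι.trans_le (cof_le_cardinalMk ι)).le.trans hιβ.le
  suffices ∃ x, #β ≤ #{b | F b ≤ x} from this.imp fun x hx => (mk_set_le _).antisymm hx
  rcases isRegular_or_eq_aleph_omega0 h₀ hβ with hreg | hω
  · obtain ⟨x, hx⟩ := infinite_pigeonhole_card F #β le_rfl h₀ (by rwa [hreg.cof_ord])
    exact ⟨x, hx.trans (mk_le_mk_of_subset fun b (hb : F b = x) => hb.le)⟩
  · choose xs hxs using fun m : ℕ =>
      exists_lt_mk_setOf_le F (hω ▸ aleph_lt_aleph.2 (natCast_lt_omega0 m)) hιβ h₀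
    obtain ⟨x, hx⟩ := not_isCofinal_iff.1 ((countable_range xs).not_isCofinal hι)
    refine ⟨x, ?_⟩
    rw [hω, aleph_limit isSuccLimit_omega0]
    refine ciSup_le' fun ⟨o, ho⟩ => ?_
    obtain ⟨m, rfl⟩ := lt_omega0.1 ho
    exact (hxs m).le.trans
      (mk_le_mk_of_subset fun b (hb : _ ≤ _) => hb.trans (hx _ (mem_range_self m)).le)

lemma exists_mk_eq_forall_infinite_neighbours_lt [LinearOrder ι] (hι : ℵ₀ < Order.cof ι)
    {E : α → β → Prop} (e : α → ι) (hE : ∀ b, {a | E a b}.Infinite) (hιβ : #ι < #β)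
    (hβ : #β ≤ ℵ_ ω) : ∃ (x : ι) (t : Set β), #t = #β ∧ ∀ b ∈ t, {a | E a b ∧ e a < x}.Infinite := by
  choose F hF using fun b => (hE b).exists_infinite_sep_lt hι e
  obtain ⟨x, hx⟩ := exists_mk_setOf_le_eq hι F hιβ hβ
  exact ⟨x, _, hx, fun b (hb : F b ≤ x) => (hF b).mono fun a ha => ⟨ha.1, ha.2.trans_le hb⟩⟩

end

theorem hasAleph0Subgraph_of_mk_le_aleph_nat (n : ℕ) {α β : Type u} {E : α → β → Prop}
    (hα : #α ≤ ℵ_ n) (hβ : ℵ_ n < #β) (hβω : #β ≤ ℵ_ ω) (hE : ∀ b, {a | E a b}.Infinite) :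
    HasAleph0Subgraph E := by
  induction n generalizing α β with
  | zero =>
    have : Countable α := mk_le_aleph0_iff.1 (by simpa using hα)
    exact hasAleph0Subgraph_of_countable hE
  | succ n ih =>
    have hsucc : ℵ_ ((n + 1 : ℕ) : Ordinal) = succ (ℵ_ n) := by
      rw [Nat.cast_add_one, succ_aleph]
    let ι := (ℵ_ ((n + 1 : ℕ) : Ordinal)).ord.ToType
    have hmk : #ι = ℵ_ ((n + 1 : ℕ) : Ordinal) := by simp [ι]
    have hcof : ℵ₀ < Order.cof ι := by
      rw [cof_toType, hsucc, (isRegular_succ (aleph0_le_aleph n)).cof_ord]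
      exact (aleph0_le_aleph n).trans_lt (lt_succ _)
    obtain ⟨e⟩ : Nonempty (α ↪ ι) := by rwa [← le_def, hmk]
    obtain ⟨x, t, ht, hxt⟩ :=
      exists_mk_eq_forall_infinite_neighbours_lt hcof e hE (hmk ▸ hβ) hβω
    have hs : #{a | e a < x} ≤ ℵ_ n := by
      have hIio : #(Iio x) < succ (ℵ_ n) := (mk_Iio_lt x (by simp [ι])).trans_eq (hmk.trans hsucc)
      exact lt_succ_iff.1 ((mk_preimage_of_injective e _ e.injective).trans_lt hIio)
    refine .of_restrict ht (ih hs ?_ (ht ▸ hβω) fun b => ?_)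
    · exact ht ▸ (lt_succ (ℵ_ n)).trans (hsucc ▸ hβ)
    · exact (infinite_image_iff Subtype.val_injective.injOn).1
        ((hxt b b.2).mono fun a ha => ⟨⟨a, ha.2⟩, ha.1, rfl⟩)

theorem stmt_1 {α β : Type u} (E : α → β → Prop)
    (lam kap : Cardinal.{u})
    (hlam_inf : ℵ₀ ≤ lam) (hlt : lam < kap)
    (hkap : kap ≤ Cardinal.aleph Ordinal.omega0)
    (hA : #α = lam) (hB : #β = kap)
    (hE : ∀ b : β, {a : α | E a b}.Infinite) :
    ∃ (A' : Set α) (B' : Set β),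
      A'.Countable ∧ #B' = kap ∧
      ∀ b ∈ B', {a : α | a ∈ A' ∧ E a b}.Infinite := by
  obtain ⟨o, rfl⟩ := mem_range_aleph_iff.2 hlam_inf
  obtain ⟨n, rfl⟩ := lt_omega0.1 (aleph_lt_aleph.1 (hlt.trans_le hkap))
  subst hB
  exact hasAleph0Subgraph_of_mk_le_aleph_nat n hA.le (hA ▸ hlt) hkap hE
end

section
/- Let λ be a singular cardinal of countable cofinality, κ > λ regular, and let (f_α)_{α<κ} be a κ-scale on the tree T_λ (with respect to regular cardinals λ_n ↗ λ and ideal I on ℕ containing all finite sets). Let T be the downward closure in λ^{≤ω} of {f_α : α < κ}, and let G be the bipartite graph with sides A = λ^{<ω} ∩ T and B = {f_α : α < κ}, where f_α is joined to each of its infinitely many proper initial segments. Then G is a (λ,κ)-graph that contains no (ℵ₀,κ)-subgraph: there do not exist a countable A' ⊆ A and B' ⊆ B with |B'| = κ such that every vertex of B' has infinitely many neighbours in A'. -/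
/-!
For a set `S` of initial segments and a coordinate `n` with `|S| < λₙ`, regularity of `λₙ` bounds
the `n`-th entries of members of `S` below `λₙ`; collecting these bounds gives one `g ∈ ∏ λₙ`.
If `|A| < λₘ`, then `g` bounds every `f_α` from `m` on, contradicting that some `f_β` is above
`g` modulo `I`; hence `|A| = λ`. If `A'` is countable, `g` bounds everywhere each `f_α` with
infinitely many initial segments in `A'`, so all such `α` lie below `β`, and there are fewer
than `κ` of them.
-/

open Cardinal

/-- The initial segment of length `n` of an ω-sequence. -/
def seg {α : Type*} (f : ℕ → α) (n : ℕ) : List α := (List.range n).map f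

/-- An ideal on ℕ: a proper subset of the powerset containing ∅,
closed under subsets and finite unions. -/
def IsIdealOnNat (I : Set (Set ℕ)) : Prop :=
  (∅ : Set ℕ) ∈ I ∧ (Set.univ : Set ℕ) ∉ I ∧
  (∀ s t : Set ℕ, s ⊆ t → t ∈ I → s ∈ I) ∧
  (∀ s t : Set ℕ, s ∈ I → t ∈ I → s ∪ t ∈ I)

/-- `f <_I g` : the set where `f` is not below `g` lies in the ideal `I`. -/
def LtI (I : Set (Set ℕ)) (f g : ℕ → Ordinal.{0}) : Prop := {n : ℕ | g n ≤ f n} ∈ I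

open Filter

section Seg

variable {α : Type*}

theorem getElem?_seg (f : ℕ → α) (k n : ℕ) :
    (seg f k)[n]? = if n < k then some (f n) else none := by
  by_cases h : n < k <;> simp [seg, h]

theorem seg_injective (f : ℕ → α) : Function.Injective (seg f) := fun a b h => by
  simpa [seg] using congrArg List.length h

theorem exists_lt_seg_mem {S : Set (List α)} {f : ℕ → α}
    (h : {l | l ∈ S ∧ ∃ k, l = seg f k}.Infinite) (n : ℕ) : ∃ k, n < k ∧ seg f k ∈ S := by
  by_contra! hS
  refine h (((Set.finite_Iic n).image (seg f)).subset ?_)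
  rintro _ ⟨hl, k, rfl⟩
  exact ⟨k, Set.mem_Iic.2 (not_lt.1 fun hk => hS k hk hl), rfl⟩

end Seg

def entries {α : Type*} (S : Set (List α)) (n : ℕ) : Set α := {x | ∃ l ∈ S, l[n]? = some x}

theorem mk_entries_le {α : Type*} (S : Set (List α)) (n : ℕ) : #(entries S n) ≤ #S :=
  (mk_preimage_of_injective _ _ (Option.some_injective α)).trans mk_image_le

theorem apply_mem_entries {α : Type*} {S : Set (List α)} {g : ℕ → α} {k n : ℕ}
    (h : seg g k ∈ S) (hn : n < k) : g n ∈ entries S n :=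
  ⟨_, h, by simp [getElem?_seg, hn]⟩

theorem exists_bound_entries {κ : ℕ → Cardinal.{u}} (hκ : ∀ n, (κ n).IsRegular)
    {S : Set (List Ordinal.{u})} (hS : ∀ n, ∀ x ∈ entries S n, x < (κ n).ord) :
    ∃ g : ℕ → Ordinal.{u}, (∀ n, g n < (κ n).ord) ∧
      ∀ n, #S < lift.{u + 1} (κ n) → ∀ x ∈ entries S n, x ≤ g n := by
  classical
  refine ⟨fun n => if #S < lift.{u + 1} (κ n) then sSup (entries S n) else 0,
    fun n => ?_, fun n hn x hx => ?_⟩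
  · dsimp only
    split_ifs with h
    · refine Ordinal.sSup_lt_of_lt_cof ((mk_entries_le S n).trans_lt ?_) (hS n)
      rwa [← Ordinal.lift_cof, (hκ n).cof_ord]
    · exact (hκ n).ord_pos
  · dsimp only
    rw [if_pos hn]
    exact le_csSup ⟨(κ n).ord, fun y hy => (hS n y hy).le⟩ hx

theorem mk_setOf_forall_mem_lt_le {c : Cardinal.{u}} (hc : ℵ₀ ≤ c) :
    #{l : List Ordinal.{u} | ∀ x ∈ l, x < c.ord} ≤ lift.{u + 1} c := by
  have : Infinite (Set.Iio c.ord) := by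
    rw [Cardinal.infinite_iff, Cardinal.mk_Iio_ordinal, card_ord]
    exact aleph0_le_lift.2 hc
  calc #{l : List Ordinal.{u} | ∀ x ∈ l, x < c.ord}
      ≤ #(Set.range (List.map ((↑) : Set.Iio c.ord → Ordinal.{u}))) := by
        refine mk_le_mk_of_subset fun l hl => ?_
        exact ⟨l.attach.map fun x => ⟨x.1, hl x.1 x.2⟩, by simp⟩
    _ ≤ #(List (Set.Iio c.ord)) := mk_range_le
    _ = lift.{u + 1} c := by rw [mk_list_eq_mk, Cardinal.mk_Iio_ordinal, card_ord]

section Ideal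

variable {I : Set (Set ℕ)}

theorem IsIdealOnNat.notMem_of_finite_compl (hI : IsIdealOnNat I)
    (hfin : ∀ s : Set ℕ, s.Finite → s ∈ I) {s : Set ℕ} (hs : sᶜ.Finite) : s ∉ I := fun h =>
  hI.2.1 (by simpa using hI.2.2.2 _ _ h (hfin _ hs))

theorem LtI.irrefl (hI : IsIdealOnNat I) (g : ℕ → Ordinal.{0}) : ¬ LtI I g g := by
  simpa [LtI] using hI.2.1

theorem LtI.trans (hI : IsIdealOnNat I) {f g h : ℕ → Ordinal.{0}}
    (hfg : LtI I f g) (hgh : LtI I g h) : LtI I f h := by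
  refine hI.2.2.1 _ _ (fun n hn => ?_) (hI.2.2.2 _ _ hfg hgh)
  rcases le_or_gt (g n) (f n) with hgf | hfg
  · exact Or.inl hgf
  · exact Or.inr (hn.trans hfg.le)

theorem not_ltI_of_eventually_le (hI : IsIdealOnNat I) (hfin : ∀ s : Set ℕ, s.Finite → s ∈ I)
    {f g : ℕ → Ordinal.{0}} (h : ∀ᶠ n in atTop, g n ≤ f n) : ¬ LtI I f g := by
  rw [← Nat.cofinite_eq_atTop] at h
  exact hI.notMem_of_finite_compl hfin h

theorem injective_of_ltI {ι : Type*} [LinearOrder ι] {f : ι → ℕ → Ordinal.{0}}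
    (hI : IsIdealOnNat I) (hinc : ∀ i j : ι, i < j → LtI I (f i) (f j)) :
    Function.Injective f := by
  intro i j hij
  by_contra hne
  rcases lt_or_gt_of_ne hne with h | h
  · exact LtI.irrefl hI (f j) (hij ▸ hinc i j h)
  · exact LtI.irrefl hI (f i) (hij ▸ hinc j i h)

end Ideal

theorem not_bddAbove_of_mk_eq {ι : Type*} [LinearOrder ι] {κ : Cardinal} (hκ : ℵ₀ ≤ κ)
    (hseg : ∀ i : ι, #(Set.Iio i) < κ) {B : Set ι} (hB : #B = κ) : ¬ BddAbove B := by
  rintro ⟨j, hj⟩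
  have : #(Set.Iic j) < κ := by
    rw [← Set.Iio_insert]
    exact mk_insert_le.trans_lt (add_lt_of_lt hκ (hseg j) (one_lt_aleph0.trans_le hκ))
  exact (mk_le_mk_of_subset hj).not_gt (hB ▸ this)

def initialSegments {ι α : Type*} (f : ι → ℕ → α) : Set (List α) :=
  {l | ∃ (j : ι) (n : ℕ), l = seg (f j) n}

section Scale

variable {ι : Type*} {κ : ℕ → Cardinal.{0}} {I : Set (Set ℕ)}
  {f : ι → ℕ → Ordinal.{0}}

theorem lt_ord_of_mem_entries (hbd : ∀ i n, f i n < (κ n).ord) {S : Set (List Ordinal.{0})}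
    (hS : S ⊆ initialSegments f) {n : ℕ} {x : Ordinal.{0}} (hx : x ∈ entries S n) :
    x < (κ n).ord := by
  obtain ⟨_, hl, hlx⟩ := hx
  obtain ⟨j, k, rfl⟩ := hS hl
  rw [getElem?_seg] at hlx
  split_ifs at hlx
  exact Option.some_injective _ hlx ▸ hbd j n

theorem exists_ltI_bound (hκ : ∀ n, (κ n).IsRegular) (hbd : ∀ i n, f i n < (κ n).ord)
    (hcofin : ∀ g : ℕ → Ordinal.{0}, (∀ n, g n < (κ n).ord) → ∃ i, LtI I g (f i))
    {S : Set (List Ordinal.{0})} (hS : S ⊆ initialSegments f) :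
    ∃ j g, LtI I g (f j) ∧
      ∀ n, #S < lift.{1} (κ n) → ∀ i k, n < k → seg (f i) k ∈ S → f i n ≤ g n := by
  obtain ⟨g, hgκ, hg⟩ := exists_bound_entries hκ fun n _ => lt_ord_of_mem_entries hbd hS
  obtain ⟨j, hj⟩ := hcofin g hgκ
  exact ⟨j, g, hj, fun n hn i k hnk hk => hg n hn _ (apply_mem_entries hk hnk)⟩

theorem lift_le_mk_initialSegments (hmono : Monotone κ) (hκ : ∀ n, (κ n).IsRegular)
    (hI : IsIdealOnNat I) (hfin : ∀ s : Set ℕ, s.Finite → s ∈ I)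
    (hbd : ∀ i n, f i n < (κ n).ord)
    (hcofin : ∀ g : ℕ → Ordinal.{0}, (∀ n, g n < (κ n).ord) → ∃ i, LtI I g (f i)) (m : ℕ) :
    lift.{1} (κ m) ≤ #(initialSegments f) := by
  by_contra! hlt
  obtain ⟨j, g, hj, hg⟩ := exists_ltI_bound hκ hbd hcofin subset_rfl
  refine not_ltI_of_eventually_le hI hfin (eventually_atTop.2 ⟨m, fun n hn => ?_⟩) hj
  exact hg n (hlt.trans_le (lift_le.2 (hmono hn))) j (n + 1) n.lt_succ_self ⟨j, n + 1, rfl⟩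

theorem mk_initialSegments {lam : Cardinal.{0}} (hlam : ℵ₀ ≤ lam) (hsup : ⨆ n, κ n = lam)
    (hmono : Monotone κ) (hκ : ∀ n, (κ n).IsRegular)
    (hI : IsIdealOnNat I) (hfin : ∀ s : Set ℕ, s.Finite → s ∈ I)
    (hbd : ∀ i n, f i n < (κ n).ord)
    (hcofin : ∀ g : ℕ → Ordinal.{0}, (∀ n, g n < (κ n).ord) → ∃ i, LtI I g (f i)) :
    #(initialSegments f) = lift.{1} lam := by
  refine le_antisymm ((mk_le_mk_of_subset ?_).trans (mk_setOf_forall_mem_lt_le hlam)) ?_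
  · rintro _ ⟨j, k, rfl⟩ _ hx
    obtain ⟨n, -, rfl⟩ := List.mem_map.1 hx
    exact (hbd j n).trans_le (ord_le_ord.2 (hsup ▸ le_ciSup bddAbove_of_small n))
  · rw [← hsup, lift_iSup bddAbove_of_small]
    exact ciSup_le (lift_le_mk_initialSegments hmono hκ hI hfin hbd hcofin)

theorem bddAbove_setOf_infinite_seg_mem [LinearOrder ι] (hκ : ∀ n, (κ n).IsRegular ∧ ℵ₀ < κ n)
    (hI : IsIdealOnNat I) (hfin : ∀ s : Set ℕ, s.Finite → s ∈ I)
    (hbd : ∀ i n, f i n < (κ n).ord) (hinc : ∀ i j : ι, i < j → LtI I (f i) (f j))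
    (hcofin : ∀ g : ℕ → Ordinal.{0}, (∀ n, g n < (κ n).ord) → ∃ i, LtI I g (f i))
    {S : Set (List Ordinal.{0})} (hS : S ⊆ initialSegments f) (hcount : S.Countable) :
    BddAbove {i | {l | l ∈ S ∧ ∃ k, l = seg (f i) k}.Infinite} := by
  obtain ⟨j, g, hj, hg⟩ := exists_ltI_bound (fun n => (hκ n).1) hbd hcofin hS
  have hsmall (n : ℕ) : #S < lift.{1} (κ n) :=
    (mk_le_aleph0_iff.2 hcount.to_subtype).trans_lt (aleph0_lt_lift.2 (hκ n).2)
  refine ⟨j, fun i hi => not_lt.1 fun hji => ?_⟩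
  refine not_ltI_of_eventually_le hI hfin (Eventually.of_forall fun n => ?_)
    (hj.trans hI (hinc j i hji))
  obtain ⟨k, hnk, hk⟩ := exists_lt_seg_mem hi n
  exact hg n (hsmall n) i k hnk hk

end Scale

theorem stmt_10_general (lam kap : Cardinal.{0})
    (hlam_unc : ℵ₀ < lam)
    (hkap_reg : kap.IsRegular)
    (ι : Type) [LinearOrder ι]
    (hseg : ∀ i : ι, #{j : ι | j < i} < kap)
    (lamn : ℕ → Cardinal.{0}) (hmono : StrictMono lamn)
    (hreg : ∀ n, (lamn n).IsRegular ∧ ℵ₀ < lamn n)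
    (hsup : (⨆ n, lamn n) = lam)
    (I : Set (Set ℕ)) (hI : IsIdealOnNat I)
    (hfin : ∀ s : Set ℕ, s.Finite → s ∈ I)
    (f : ι → ℕ → Ordinal.{0}) (hbd : ∀ i n, f i n < (lamn n).ord)
    (hinc : ∀ i j : ι, i < j → LtI I (f i) (f j))
    (hcofin : ∀ g : ℕ → Ordinal.{0}, (∀ n, g n < (lamn n).ord) → ∃ i, LtI I g (f i)) :
    -- `A` is the downward closure of the tops `f i`, i.e. all their finite initial segments
    (∀ i : ι, {l : List Ordinal.{0} |
        l ∈ {l | ∃ (j : ι) (n : ℕ), l = seg (f j) n} ∧ ∃ n, l = seg (f i) n}.Infinite) ∧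
    #{l : List Ordinal.{0} | ∃ (j : ι) (n : ℕ), l = seg (f j) n} = Cardinal.lift.{1} lam ∧
    Function.Injective f ∧
    ¬ ∃ (A' : Set (List Ordinal.{0})) (B' : Set ι),
        A' ⊆ {l | ∃ (j : ι) (n : ℕ), l = seg (f j) n} ∧ A'.Countable ∧ #B' = kap ∧
        ∀ i ∈ B', {l : List Ordinal.{0} | l ∈ A' ∧ ∃ n, l = seg (f i) n}.Infinite := by
  refine ⟨fun i => ?_, mk_initialSegments hlam_unc.le hsup hmono.monotone (fun n => (hreg n).1)
    hI hfin hbd hcofin, injective_of_ltI hI hinc, ?_⟩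
  · exact Set.infinite_of_injective_forall_mem (seg_injective (f i))
      fun n => ⟨⟨i, n, rfl⟩, n, rfl⟩
  · rintro ⟨A', B', hA', hcount, hB', hinf⟩
    exact not_bddAbove_of_mk_eq hkap_reg.aleph0_le hseg hB'
      ((bddAbove_setOf_infinite_seg_mem hreg hI hfin hbd hinc hcofin hA' hcount).mono hinf)

theorem stmt_10 (lam kap : Cardinal.{0})
    (hlam_unc : ℵ₀ < lam) (hlam_cof : lam.ord.cof = ℵ₀)
    (hkap_reg : kap.IsRegular) (hlk : lam < kap)
    (ι : Type) [LinearOrder ι] [WellFoundedLT ι] (hι : #ι = kap)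
    (hseg : ∀ i : ι, #{j : ι | j < i} < kap)
    (lamn : ℕ → Cardinal.{0}) (hmono : StrictMono lamn)
    (hreg : ∀ n, (lamn n).IsRegular ∧ ℵ₀ < lamn n)
    (hsup : (⨆ n, lamn n) = lam)
    (I : Set (Set ℕ)) (hI : IsIdealOnNat I)
    (hfin : ∀ s : Set ℕ, s.Finite → s ∈ I)
    (f : ι → ℕ → Ordinal.{0}) (hbd : ∀ i n, f i n < (lamn n).ord)
    (hinc : ∀ i j : ι, i < j → LtI I (f i) (f j))
    (hcofin : ∀ g : ℕ → Ordinal.{0}, (∀ n, g n < (lamn n).ord) → ∃ i, LtI I g (f i)) :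
    -- `A` is the downward closure of the tops `f i`, i.e. all their finite initial segments
    (∀ i : ι, {l : List Ordinal.{0} |
        l ∈ {l | ∃ (j : ι) (n : ℕ), l = seg (f j) n} ∧ ∃ n, l = seg (f i) n}.Infinite) ∧
    #{l : List Ordinal.{0} | ∃ (j : ι) (n : ℕ), l = seg (f j) n} = Cardinal.lift.{1} lam ∧
    Function.Injective f ∧
    ¬ ∃ (A' : Set (List Ordinal.{0})) (B' : Set ι),
        A' ⊆ {l | ∃ (j : ι) (n : ℕ), l = seg (f j) n} ∧ A'.Countable ∧ #B' = kap ∧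
        ∀ i ∈ B', {l : List Ordinal.{0} | l ∈ A' ∧ ∃ n, l = seg (f i) n}.Infinite :=
  stmt_10_general lam kap hlam_unc hkap_reg ι hseg lamn hmono hreg hsup I hI hfin f hbd hinc hcofin
end
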